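/- arXiv:1004.2223 — 2 statements merged into one kernel-verified Lean document; each statement's English description precedes it below -/
import Mathlib

section
/- Let $\phi : R_{m-1}^W \to d(R_m)$ be the map $g \mapsto d(X_1 g)$, where $R_{m-1}^W$ is spanned by the monomial symmetric functions $m_{ij}$ with $0 \le i \le j \le m-2$. For $j \le m-2$: $\phi(m_{ij}) = -X_1^i X_2^{j+1}$ if $j - i \le 1$, and $\phi(m_{ij}) = -X_1^i X_2^{j+1} + X_1^{i+1} X_2^{j}$ if $j - i > 1$. Consequently $\phi|_{R_{m-1}^W}$ is an isomorphism of $A$-modules onto $d(R_m)$, the span of $\{X_1^i X_2^j : 0 \le i < j \le m-1\}$. -/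
/-!
`φ(m_{ij})` is `-X₁^i X₂^{j+1}` plus, when `j - i > 1`, the monomial `X₁^{i+1} X₂^j`, which is
strictly closer to the diagonal. So `φ` is unitriangular for the pairing `m_{i,j-1} ↔ X₁^i X₂^j`
ordered by `j - i`, and peeling off leading terms gives the explicit inverse
`φ⁻¹(X₁^i X₂^j) = -m_{i,j-1} + φ⁻¹(X₁^{i+1} X₂^{j-1})`, which maps `d(R_m)` into `R_{m-1}^W`.
-/

noncomputable section

/-- The Laurent polynomial ring `A[X₁^{±1}, X₂^{±1}]`. -/
abbrev Lau (A : Type) [CommRing A] : Type := AddMonoidAlgebra A (ℤ × ℤ)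

variable (A : Type) [CommRing A]

/-- The monomial `X₁^i X₂^j`. -/
def Xm (i j : ℤ) : Lau A := AddMonoidAlgebra.single (i, j) 1

/-- The monomial symmetric functions `m_{ij}`. -/
def msf (i j : ℤ) : Lau A := if i = j then Xm A i i else Xm A i j + Xm A j i

lemma Xm_mul_Xm (a b i j : ℤ) : Xm A a b * Xm A i j = Xm A (a + i) (b + j) := by
  simp [Xm, AddMonoidAlgebra.single_mul_single, Prod.mk_add_mk]

def IsAntisymmetrizer (d : Lau A →ₗ[A] Lau A) : Prop :=
  ∀ i j : ℤ, d (Xm A i j) = if i < j then Xm A i j else if j < i then -Xm A j i else 0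

def phi (d : Lau A →ₗ[A] Lau A) : Lau A →ₗ[A] Lau A :=
  d ∘ₗ LinearMap.mulLeft A (Xm A 1 0)

/-- `R_{m-1}^W`. -/
def symSpan (m : ℤ) : Submodule A (Lau A) :=
  Submodule.span A {p | ∃ i j : ℤ, 0 ≤ i ∧ i ≤ j ∧ j ≤ m - 2 ∧ p = msf A i j}

/-- `d(R_m)`. -/
def upperSpan (m : ℤ) : Submodule A (Lau A) :=
  Submodule.span A {p | ∃ i j : ℤ, 0 ≤ i ∧ i < j ∧ j ≤ m - 1 ∧ p = Xm A i j}

lemma phi_msf {d : Lau A →ₗ[A] Lau A} (hd : IsAntisymmetrizer A d) {i j : ℤ} (hij : i ≤ j) :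
    phi A d (msf A i j) =
      if j - i ≤ 1 then -Xm A i (j + 1) else -Xm A i (j + 1) + Xm A (i + 1) j := by
  simp only [phi, LinearMap.comp_apply, LinearMap.mulLeft_apply, msf]
  rcases hij.eq_or_lt with rfl | hlt
  · rw [if_pos rfl, Xm_mul_Xm, hd, zero_add, add_comm 1 i]
    split_ifs <;> first | omega | rfl
  · rw [if_neg hlt.ne, mul_add, map_add, Xm_mul_Xm, Xm_mul_Xm, hd, hd, zero_add, zero_add,
      add_comm 1 i, add_comm 1 j]
    split_ifs <;> first | omega | abel

lemma phi_mapsTo {d : Lau A →ₗ[A] Lau A} (hd : IsAntisymmetrizer A d) (m : ℤ) :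
    Set.MapsTo (phi A d) (symSpan A m) (upperSpan A m) := by
  refine (Submodule.span_le (p := (upperSpan A m).comap (phi A d))).2 ?_
  rintro _ ⟨i, j, hi, hij, hjm, rfl⟩
  have mem {a b : ℤ} (ha : 0 ≤ a) (hab : a < b) (hb : b ≤ m - 1) : Xm A a b ∈ upperSpan A m :=
    Submodule.subset_span ⟨a, b, ha, hab, hb, rfl⟩
  change phi A d (msf A i j) ∈ upperSpan A m
  rw [phi_msf A hd hij]
  split_ifs
  · exact neg_mem (mem hi (by omega) (by omega))
  · exact add_mem (neg_mem (mem hi (by omega) (by omega))) (mem (by omega) (by omega) (by omega))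

def phiInvXm (i j : ℤ) : Lau A :=
  if i < j then -msf A i (j - 1) + phiInvXm (i + 1) (j - 1) else 0
termination_by (j - i).toNat
decreasing_by omega

def phiInv : Lau A →ₗ[A] Lau A :=
  (AddMonoidAlgebra.basis (ℤ × ℤ) A).constr A fun p => phiInvXm A p.1 p.2

lemma phiInv_Xm (i j : ℤ) : phiInv A (Xm A i j) = phiInvXm A i j :=
  (AddMonoidAlgebra.basis (ℤ × ℤ) A).constr_basis A _ (i, j)

lemma phiInvXm_of_le {i j : ℤ} (h : j ≤ i) : phiInvXm A i j = 0 := by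
  rw [phiInvXm, if_neg (not_lt.2 h)]

lemma phiInvXm_of_lt {i j : ℤ} (h : i < j) :
    phiInvXm A i j = -msf A i (j - 1) + phiInvXm A (i + 1) (j - 1) := by
  rw [phiInvXm, if_pos h]

lemma phiInv_phi_msf {d : Lau A →ₗ[A] Lau A} (hd : IsAntisymmetrizer A d) {i j : ℤ}
    (hij : i ≤ j) : phiInv A (phi A d (msf A i j)) = msf A i j := by
  rw [phi_msf A hd hij]
  split_ifs
  · rw [map_neg, phiInv_Xm, phiInvXm_of_lt A (by omega), phiInvXm_of_le A (by omega),
      add_sub_cancel_right]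
    abel
  · rw [map_add, map_neg, phiInv_Xm, phiInv_Xm, phiInvXm_of_lt A (by omega), add_sub_cancel_right]
    abel

lemma phi_phiInvXm {d : Lau A →ₗ[A] Lau A} (hd : IsAntisymmetrizer A d) (i j : ℤ) (hij : i < j) :
    phi A d (phiInvXm A i j) = Xm A i j := by
  rw [phiInvXm_of_lt A hij, map_add, map_neg, phi_msf A hd (by omega : i ≤ j - 1), sub_add_cancel]
  rcases lt_or_ge (i + 1) (j - 1) with hlt | hle
  · rw [phi_phiInvXm hd (i + 1) (j - 1) hlt, if_neg (by omega)]
    abel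
  · rw [phiInvXm_of_le A hle, if_pos (by omega), map_zero]
    abel
termination_by (j - i).toNat
decreasing_by omega

lemma phiInvXm_mem_symSpan (m : ℤ) (i j : ℤ) (hi : 0 ≤ i) (hij : i < j) (hjm : j ≤ m - 1) :
    phiInvXm A i j ∈ symSpan A m := by
  rw [phiInvXm_of_lt A hij]
  refine add_mem (neg_mem (Submodule.subset_span ⟨i, j - 1, hi, by omega, by omega, rfl⟩)) ?_
  rcases lt_or_ge (i + 1) (j - 1) with hlt | hle
  · exact phiInvXm_mem_symSpan m (i + 1) (j - 1) (by omega) hlt (by omega)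
  · rw [phiInvXm_of_le A hle]
    exact zero_mem _
termination_by (j - i).toNat
decreasing_by omega

lemma phiInv_mapsTo (m : ℤ) : Set.MapsTo (phiInv A) (upperSpan A m) (symSpan A m) := by
  refine (Submodule.span_le (p := (symSpan A m).comap (phiInv A))).2 ?_
  rintro _ ⟨i, j, hi, hij, hjm, rfl⟩
  change phiInv A (Xm A i j) ∈ symSpan A m
  rw [phiInv_Xm]
  exact phiInvXm_mem_symSpan A m i j hi hij hjm

lemma phi_invOn {d : Lau A →ₗ[A] Lau A} (hd : IsAntisymmetrizer A d) (m : ℤ) :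
    Set.InvOn (phiInv A) (phi A d) (symSpan A m) (upperSpan A m) := by
  constructor
  · refine LinearMap.eqOn_span' (f := phiInv A ∘ₗ phi A d) (g := LinearMap.id) ?_
    rintro _ ⟨i, j, -, hij, -, rfl⟩
    exact phiInv_phi_msf A hd hij
  · refine LinearMap.eqOn_span' (f := phi A d ∘ₗ phiInv A) (g := LinearMap.id) ?_
    rintro _ ⟨i, j, -, hij, -, rfl⟩
    exact (congrArg (phi A d) (phiInv_Xm A i j)).trans (phi_phiInvXm A hd i j hij)

lemma phi_bijOn {d : Lau A →ₗ[A] Lau A} (hd : IsAntisymmetrizer A d) (m : ℤ) :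
    Set.BijOn (phi A d) (symSpan A m) (upperSpan A m) :=
  (phi_invOn A hd m).bijOn (phi_mapsTo A hd m) (phiInv_mapsTo A m)

theorem stmt6 (m : ℕ) (d : Lau A →ₗ[A] Lau A)
    (hd : ∀ i j : ℤ, d (Xm A i j) =
      if i < j then Xm A i j else if j < i then -Xm A j i else 0) :
    (∀ i j : ℤ, 0 ≤ i → i ≤ j → j ≤ (m : ℤ) - 2 →
      d (Xm A 1 0 * msf A i j) =
        if j - i ≤ 1 then -Xm A i (j + 1)
        else -Xm A i (j + 1) + Xm A (i + 1) j) ∧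
    (∀ g ∈ Submodule.span A
        {p : Lau A | ∃ i j : ℤ, 0 ≤ i ∧ i ≤ j ∧ j ≤ (m : ℤ) - 2 ∧ p = msf A i j},
      d (Xm A 1 0 * g) ∈ Submodule.span A
        {p : Lau A | ∃ i j : ℤ, 0 ≤ i ∧ i < j ∧ j ≤ (m : ℤ) - 1 ∧ p = Xm A i j}) ∧
    (∀ g ∈ Submodule.span A
        {p : Lau A | ∃ i j : ℤ, 0 ≤ i ∧ i ≤ j ∧ j ≤ (m : ℤ) - 2 ∧ p = msf A i j},
      ∀ g' ∈ Submodule.span A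
        {p : Lau A | ∃ i j : ℤ, 0 ≤ i ∧ i ≤ j ∧ j ≤ (m : ℤ) - 2 ∧ p = msf A i j},
      d (Xm A 1 0 * g) = d (Xm A 1 0 * g') → g = g') ∧
    (∀ y ∈ Submodule.span A
        {p : Lau A | ∃ i j : ℤ, 0 ≤ i ∧ i < j ∧ j ≤ (m : ℤ) - 1 ∧ p = Xm A i j},
      ∃ g ∈ Submodule.span A
        {p : Lau A | ∃ i j : ℤ, 0 ≤ i ∧ i ≤ j ∧ j ≤ (m : ℤ) - 2 ∧ p = msf A i j},
      d (Xm A 1 0 * g) = y) := by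
  have hbij := phi_bijOn A hd m
  exact ⟨fun i j _ hij _ => phi_msf A hd hij, fun g hg => hbij.mapsTo hg,
    fun g hg g' hg' h => hbij.injOn hg hg' h, fun y hy => hbij.surjOn hy⟩
end
end

section
/- Let $\mathcal{K}_2^{\mathbf v} = H_2^{\mathrm{aff}}/J_{\mathbf v}$ be the cyclotomic Hecke algebra of type $G(m,1,2)$ over $A = \mathbb{Z}[q^{\pm1}, v_1^{\pm1},\dots,v_m^{\pm1}]$, with basis theorem $\mathcal{K}_2^{\mathbf v} = R_m \oplus R_m T$ where $R_m$ is the image of the $m$-restricted polynomials. If $z = f + gT$ (with $f, g \in R_m$) commutes with $T$, then both $f$ and $g$ are symmetric: $f = {}^s f$ and $g = {}^s g$. Conversely if $f, g$ are symmetric then $f + gT$ commutes with $T$. -/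
noncomputable section

/-- The ring `A = ℤ[q^{±1}, v₁^{±1}, …, v_m^{±1}]`, realized as the group
algebra of `ℤ × ℤ^m` over `ℤ`. -/
abbrev Av (m : ℕ) : Type := AddMonoidAlgebra ℤ (ℤ × (Fin m → ℤ))

/-- The element `q`. -/
def qv (m : ℕ) : Av m := AddMonoidAlgebra.single (1, 0) 1

/-- The element `vᵢ`. -/
def vv (m : ℕ) (i : Fin m) : Av m := AddMonoidAlgebra.single (0, Pi.single i 1) 1

/-- The `j`-th elementary symmetric polynomial of `v₁, …, v_m`. -/
def ev (m : ℕ) (j : ℕ) : Av m :=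
  ∑ s ∈ Finset.powersetCard j (Finset.univ : Finset (Fin m)), ∏ i ∈ s, vv m i

variable (A : Type) [CommRing A]

/-- The automorphism `s` interchanging `X₁` and `X₂`. -/
def sw (p : Lau A) : Lau A := AddMonoidAlgebra.ofCoeff (Finsupp.equivMapDomain (Equiv.prodComm ℤ ℤ) p.coeff)

/-- Constants. -/
def CC (a : A) : Lau A := algebraMap A (Lau A) a

/-- `p` is `m`-restricted. -/
def Res (m : ℕ) (p : Lau A) : Prop :=
  ∀ ab ∈ p.coeff.support, 0 ≤ ab.1 ∧ ab.1 ≤ (m : ℤ) - 1 ∧ 0 ≤ ab.2 ∧ ab.2 ≤ (m : ℤ) - 1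

/-- `f_v(X₁) = ∏ᵢ (X₁ - vᵢ)`. -/
def fv1 (m : ℕ) : Lau (Av m) := ∏ i : Fin m, (Xm (Av m) 1 0 - CC (Av m) (vv m i))

/-- `f_v(X₂) = ∏ᵢ (X₂ - vᵢ)`. -/
def fv2 (m : ℕ) : Lau (Av m) := ∏ i : Fin m, (Xm (Av m) 0 1 - CC (Av m) (vv m i))

/-- The complete homogeneous symmetric polynomial `H_k` in `X₁, X₂`. -/
def Hc (k : ℕ) : Lau A := ∑ i ∈ Finset.range (k + 1), Xm A (i : ℤ) ((k : ℤ) - (i : ℤ))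

/-- The element `z = (-1)^{m+1} e_m + X₁X₂ ∑_{j=0}^{m-2} (-1)^j e_j H_{m-2-j}`. -/
def zel (m : ℕ) : Lau (Av m) :=
  CC (Av m) ((-1 : Av m) ^ (m + 1) * ev m m) +
    Xm (Av m) 1 1 *
      ∑ j ∈ Finset.range (m - 1), CC (Av m) ((-1 : Av m) ^ j * ev m j) * Hc (Av m) (m - 2 - j)

/-!
Write `u = 1 - X₁X₂⁻¹`, so that `D(p) u = p - ˢp`. Using `T² = (q - 1)T + q` and
`T p = ˢp T + (q - 1) D(p)`, both `zT` and `Tz` for `z = f + gT` are brought to the form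
`a + bT` with `a, b` again restricted, and the basis theorem turns `zT = Tz` into two equations
in the Laurent polynomial ring. Multiplying them by powers of `u` eliminates `f` and leaves
`(g - ˢg)(q u² - (q - 1)² X₁X₂⁻¹) = 0`. The second factor has augmentation `-(q - 1)² ≠ 0`,
so `g` is symmetric, since the Laurent polynomial ring over a domain has no zero divisors;
then `(q - 1) D(f) = 0` makes `f` symmetric. Conversely, `T` commutes with every symmetric
Laurent polynomial.
-/

open Finset

variable {A}

theorem Xm_mul (i j k l : ℤ) : Xm A i j * Xm A k l = Xm A (i + k) (j + l) := by
  rw [Xm, Xm, AddMonoidAlgebra.single_mul_single, one_mul]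
  rfl

theorem smul_Xm (c : A) (i j : ℤ) : c • Xm A i j = AddMonoidAlgebra.single (i, j) c := by
  rw [Xm, AddMonoidAlgebra.smul_single, smul_eq_mul, mul_one]

theorem sw_eq_sum (p : Lau A) :
    sw A p = p.coeff.sum fun ab c => AddMonoidAlgebra.single (ab.2, ab.1) c := by
  rw [sw, Finsupp.equivMapDomain_eq_mapDomain, Finsupp.mapDomain,
    AddMonoidAlgebra.ofCoeff_finsuppSum]
  rfl

theorem sum_Xm_mul_one_sub (a b : ℤ) (n : ℕ) :
    (∑ k ∈ range n, Xm A (a + k) (b - k)) * (1 - Xm A 1 (-1)) =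
      Xm A a b - Xm A (a + n) (b - n) := by
  have step : ∀ k : ℕ, Xm A (a + k) (b - k) * (1 - Xm A 1 (-1)) =
      Xm A (a + k) (b - k) - Xm A (a + ↑(k + 1)) (b - ↑(k + 1)) := by
    intro k
    rw [mul_sub, mul_one, Xm_mul]
    push_cast
    ring_nf
  rw [sum_mul, sum_congr rfl fun k _ => step k]
  simpa using sum_range_sub' (fun k : ℕ => Xm A (a + k) (b - k)) n

variable (A) in
/-- `(X₁^a X₂^b - X₁^b X₂^a) / (1 - X₁ X₂⁻¹)`, written out as a geometric sum. -/
def demazureMono (a b : ℤ) : Lau A :=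
  if a ≤ b then ∑ k ∈ range (b - a).toNat, Xm A (a + k) (b - k)
  else -∑ k ∈ range (a - b).toNat, Xm A (b + k) (a - k)

theorem demazureMono_mul (a b : ℤ) :
    demazureMono A a b * (1 - Xm A 1 (-1)) = Xm A a b - Xm A b a := by
  unfold demazureMono
  split_ifs with h
  · rw [sum_Xm_mul_one_sub, Int.toNat_of_nonneg (by omega)]
    ring_nf
  · rw [neg_mul, sum_Xm_mul_one_sub, Int.toNat_of_nonneg (by omega)]
    ring_nf

variable (A) in
def demazure (p : Lau A) : Lau A := p.coeff.sum fun ab c => c • demazureMono A ab.1 ab.2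

theorem demazure_mul (p : Lau A) : demazure A p * (1 - Xm A 1 (-1)) = p - sw A p := by
  rw [demazure, Finsupp.sum, sum_mul, sw_eq_sum]
  conv_rhs => arg 1; rw [← AddMonoidAlgebra.sum_coeff_single p]
  rw [Finsupp.sum, Finsupp.sum, ← sum_sub_distrib]
  refine sum_congr rfl fun ab _ => ?_
  rw [smul_mul_assoc, demazureMono_mul, smul_sub, smul_Xm, smul_Xm]

theorem res_iff_mem_supported {m : ℕ} {p : Lau A} :
    Res A m p ↔ p ∈ AddMonoidAlgebra.supported A A
      (Set.Icc 0 ((m : ℤ) - 1) ×ˢ Set.Icc 0 ((m : ℤ) - 1)) := by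
  simp only [Res, AddMonoidAlgebra.mem_supported, Set.subset_def, Finset.mem_coe, Set.mem_prod,
    Set.mem_Icc, and_assoc]

theorem Xm_mem_supported {s : Set (ℤ × ℤ)} {i j : ℤ} (h : (i, j) ∈ s) :
    Xm A i j ∈ AddMonoidAlgebra.supported A A s := by
  rw [AddMonoidAlgebra.mem_supported, Xm]
  exact fun x hx => (Finset.mem_singleton.mp (Finsupp.support_single_subset hx)) ▸ h

theorem demazureMono_mem_supported {lo hi a b : ℤ} (ha : a ∈ Set.Icc lo hi)
    (hb : b ∈ Set.Icc lo hi) :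
    demazureMono A a b ∈ AddMonoidAlgebra.supported A A (Set.Icc lo hi ×ˢ Set.Icc lo hi) := by
  rw [Set.mem_Icc] at ha hb
  unfold demazureMono
  split_ifs with h
  all_goals
    try refine Submodule.neg_mem _ ?_
  all_goals
    refine Submodule.sum_mem _ fun k hk => Xm_mem_supported ?_
    rw [Finset.mem_range] at hk
    simp only [Set.mem_prod, Set.mem_Icc]
    omega

namespace Res

variable {m : ℕ} {p r : Lau A}

theorem add (hp : Res A m p) (hr : Res A m r) : Res A m (p + r) :=
  res_iff_mem_supported.mpr <|
    Submodule.add_mem _ (res_iff_mem_supported.mp hp) (res_iff_mem_supported.mp hr)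

theorem CC_mul (a : A) (hp : Res A m p) : Res A m (CC A a * p) := by
  rw [CC, ← Algebra.smul_def]
  exact res_iff_mem_supported.mpr <| Submodule.smul_mem _ a (res_iff_mem_supported.mp hp)

theorem sw (hp : Res A m p) : Res A m (sw A p) := fun ab hab => by
  have hab' := Finsupp.mem_support_iff.mp hab
  change p.coeff (ab.2, ab.1) ≠ 0 at hab'
  obtain ⟨h₁, h₂, h₃, h₄⟩ := hp (ab.2, ab.1) (Finsupp.mem_support_iff.mpr hab')
  exact ⟨h₃, h₄, h₁, h₂⟩

theorem demazure (hp : Res A m p) : Res A m (demazure A p) := by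
  refine res_iff_mem_supported.mpr <| Submodule.finsuppSum_mem _ _ _ _ fun ab hab =>
    Submodule.smul_mem _ _ (demazureMono_mem_supported ?_ ?_)
  all_goals
    have := hp ab (Finsupp.mem_support_iff.mpr hab)
    rw [Set.mem_Icc]
    omega

end Res

section Hecke

variable {R K : Type} [CommRing R] [Ring K] [Algebra R K] (ι : Lau R →ₐ[R] K)

def BernsteinRelation (T : K) (q : R) : Prop :=
  ∀ f g : Lau R, g * (1 - Xm R 1 0 * Xm R 0 (-1)) = f - sw R f →
    T * ι f = ι (sw R f) * T + algebraMap R K (q - 1) * ι g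

variable {T : K} {q : R}

theorem map_CC_mul (a : R) (p : Lau R) : ι (CC R a * p) = algebraMap R K a * ι p := by
  rw [map_mul, CC, AlgHom.commutes]

theorem mul_T_mul_T_eq (hquad : (T - algebraMap R K q) * (T + 1) = 0) (x : K) :
    x * (T * T) = algebraMap R K q * (x * T) - x * T + algebraMap R K q * x := by
  have hT2 : T * T = algebraMap R K q * T - T + algebraMap R K q := by
    rw [← sub_eq_zero, ← hquad]
    noncomm_ring
  rw [hT2, mul_add, mul_sub, ← mul_assoc, ← Algebra.commutes, mul_assoc, Algebra.commutes]

theorem basis_form_mul_T (hquad : (T - algebraMap R K q) * (T + 1) = 0) (f g : Lau R) :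
    (ι f + ι g * T) * T = ι (CC R q * g) + ι (f + CC R (q - 1) * g) * T := by
  rw [add_mul, mul_assoc, mul_T_mul_T_eq hquad]
  simp only [map_add, map_CC_mul, add_mul, map_sub, map_one, sub_mul, one_mul, mul_assoc]
  abel

theorem T_mul_eq_demazure (hB : BernsteinRelation ι T q) (p : Lau R) :
    T * ι p = ι (sw R p) * T + algebraMap R K (q - 1) * ι (demazure R p) :=
  hB p _ (by rw [Xm_mul, add_zero, zero_add, demazure_mul])

theorem commute_T_of_sw_eq (hB : BernsteinRelation ι T q) {p : Lau R} (hp : sw R p = p) :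
    Commute T (ι p) := by
  have h := hB p 0 (by rw [hp, zero_mul, sub_self])
  rwa [hp, map_zero, mul_zero, add_zero] at h

theorem T_mul_basis_form (hquad : (T - algebraMap R K q) * (T + 1) = 0)
    (hB : BernsteinRelation ι T q) (f g : Lau R) :
    T * (ι f + ι g * T) = ι (CC R (q - 1) * demazure R f + CC R q * sw R g) +
      ι (sw R f + CC R (q - 1) * sw R g + CC R (q - 1) * demazure R g) * T := by
  rw [mul_add, T_mul_eq_demazure ι hB f, ← mul_assoc, T_mul_eq_demazure ι hB g, add_mul,
    mul_assoc (ι (sw R g)), mul_T_mul_T_eq hquad]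
  simp only [map_add, map_CC_mul, add_mul, map_sub, map_one, sub_mul, one_mul, mul_assoc]
  abel

theorem eq_and_eq_of_basis_form_eq {m : ℕ}
    (hfree : ∀ h : K, ∃! fg : Lau R × Lau R,
      Res R m fg.1 ∧ Res R m fg.2 ∧ h = ι fg.1 + ι fg.2 * T)
    {a b c d : Lau R} (ha : Res R m a) (hb : Res R m b) (hc : Res R m c) (hd : Res R m d)
    (h : ι a + ι b * T = ι c + ι d * T) : a = c ∧ b = d := by
  obtain ⟨_, _, huniq⟩ := hfree (ι a + ι b * T)
  exact Prod.ext_iff.mp <| (huniq (a, b) ⟨ha, hb, rfl⟩).trans (huniq (c, d) ⟨hc, hd, h⟩).symm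

end Hecke

section

variable {R : Type} [CommRing R]

def augmentation : Lau R →ₐ[R] R := AddMonoidAlgebra.lift R R (ℤ × ℤ) 1

theorem augmentation_Xm (i j : ℤ) : augmentation (Xm R i j) = 1 := by
  simp [augmentation, Xm, AddMonoidAlgebra.lift_single]

theorem augmentation_CC (a : R) : augmentation (CC R a) = a :=
  augmentation.commutes a

theorem sw_eq_of_demazure_relations [NoZeroDivisors R] {q : R} (hq : q ≠ 1) {f g : Lau R}
    (h₁ : CC R q * g = CC R (q - 1) * demazure R f + CC R q * sw R g)
    (h₂ : f + CC R (q - 1) * g =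
      sw R f + CC R (q - 1) * sw R g + CC R (q - 1) * demazure R g) :
    sw R f = f ∧ sw R g = g := by
  have hq' : q - 1 ≠ 0 := sub_ne_zero.mpr hq
  have hf := demazure_mul f
  have hg := demazure_mul g
  have hdisc : CC R q * (1 - Xm R 1 (-1)) ^ 2 - CC R (q - 1) ^ 2 * Xm R 1 (-1) ≠ 0 := by
    intro h
    have := congrArg augmentation h
    rw [map_sub, map_mul, map_mul, map_pow, map_pow, map_sub, map_one, augmentation_Xm,
      augmentation_CC, augmentation_CC, map_zero] at this
    exact pow_ne_zero 2 hq' (by linear_combination -this)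
  have key : (g - sw R g) *
      (CC R q * (1 - Xm R 1 (-1)) ^ 2 - CC R (q - 1) ^ 2 * Xm R 1 (-1)) = 0 := by
    linear_combination (1 - Xm R 1 (-1)) ^ 2 * h₁
      + CC R (q - 1) * (1 - Xm R 1 (-1)) * hf
      + CC R (q - 1) * (1 - Xm R 1 (-1)) * h₂
      + CC R (q - 1) ^ 2 * hg
  have hgs : g - sw R g = 0 := (mul_eq_zero.mp key).resolve_right hdisc
  have hCC : CC R (q - 1) ≠ 0 := fun h => hq' <| by
    rw [← augmentation_CC (q - 1), h, map_zero]
  have hDf : CC R (q - 1) * demazure R f = 0 := by linear_combination CC R q * hgs - h₁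
  rw [(mul_eq_zero.mp hDf).resolve_left hCC, zero_mul, eq_comm, sub_eq_zero] at hf
  exact ⟨hf.symm, (sub_eq_zero.mp hgs).symm⟩

end

theorem qv_ne_one (m : ℕ) : qv m ≠ 1 := by
  rw [qv, AddMonoidAlgebra.one_def, Ne, AddMonoidAlgebra.single_left_inj one_ne_zero]
  simp [Prod.ext_iff]

theorem stmt12_general (m : ℕ)
    (K : Type) [Ring K] [Algebra (Av m) K]
    (ι : Lau (Av m) →ₐ[Av m] K) (T : K)
    (hquad : (T - algebraMap (Av m) K (qv m)) * (T + 1) = 0)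
    (hcomm : ∀ f g : Lau (Av m),
      g * (1 - Xm (Av m) 1 0 * Xm (Av m) 0 (-1)) = f - sw (Av m) f →
      T * ι f = ι (sw (Av m) f) * T + algebraMap (Av m) K (qv m - 1) * ι g)
    (hfree : ∀ h : K, ∃! fg : Lau (Av m) × Lau (Av m),
      Res (Av m) m fg.1 ∧ Res (Av m) m fg.2 ∧ h = ι fg.1 + ι fg.2 * T) :
    ∀ f g : Lau (Av m), Res (Av m) m f → Res (Av m) m g →
      (Commute (ι f + ι g * T) T ↔ (sw (Av m) f = f ∧ sw (Av m) g = g)) := by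
  intro f g hf hg
  constructor
  · intro hC
    have hT := (basis_form_mul_T ι hquad f g).symm.trans
      (hC.eq.trans (T_mul_basis_form ι hquad hcomm f g))
    obtain ⟨h₁, h₂⟩ := eq_and_eq_of_basis_form_eq ι hfree (hg.CC_mul _)
      (hf.add (hg.CC_mul _)) ((hf.demazure.CC_mul _).add (hg.sw.CC_mul _))
      ((hf.sw.add (hg.sw.CC_mul _)).add (hg.demazure.CC_mul _)) hT
    exact sw_eq_of_demazure_relations (qv_ne_one m) h₁ h₂
  · rintro ⟨hsf, hsg⟩
    exact (commute_T_of_sw_eq ι hcomm hsf).symm.add_left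
      ((commute_T_of_sw_eq ι hcomm hsg).symm.mul_left (Commute.refl T))

theorem stmt12 (m : ℕ)
    (K : Type) [Ring K] [Algebra (Av m) K]
    (ι : Lau (Av m) →ₐ[Av m] K) (T : K)
    (hquad : (T - algebraMap (Av m) K (qv m)) * (T + 1) = 0)
    (hTX : T * ι (Xm (Av m) 1 0) * T = algebraMap (Av m) K (qv m) * ι (Xm (Av m) 0 1))
    (hcomm : ∀ f g : Lau (Av m),
      g * (1 - Xm (Av m) 1 0 * Xm (Av m) 0 (-1)) = f - sw (Av m) f →
      T * ι f = ι (sw (Av m) f) * T + algebraMap (Av m) K (qv m - 1) * ι g)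
    (hcyc : ι (fv1 m) = 0)
    (hfree : ∀ h : K, ∃! fg : Lau (Av m) × Lau (Av m),
      Res (Av m) m fg.1 ∧ Res (Av m) m fg.2 ∧ h = ι fg.1 + ι fg.2 * T) :
    ∀ f g : Lau (Av m), Res (Av m) m f → Res (Av m) m g →
      (Commute (ι f + ι g * T) T ↔ (sw (Av m) f = f ∧ sw (Av m) g = g)) :=
  stmt12_general m K ι T hquad hcomm hfree
end
end
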